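/- The conditional expected number of elimination rounds E[I(2,n)] is strictly increasing in n: for every n ≥ 1, E[I(2,n+1)] > E[I(2,n)]. -/

import Mathlib

open Finset Filter

noncomputable section

/-- Row action `i` is strictly dominated in the restricted game with Row actions `X`
and Column actions `Y`, for Row payoff matrix `R`. -/
def RowDomIn {m n : ℕ} (R : Fin m → Fin n → ℝ) (X : Finset (Fin m)) (Y : Finset (Fin n))
    (i : Fin m) : Prop :=
  ∃ i' ∈ X, ∀ j ∈ Y, R i j < R i' j

/-- Column action `j` is strictly dominated in the restricted game with Row actions `X`
and Column actions `Y`, for Column payoff matrix `C`. -/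
def ColDomIn {m n : ℕ} (C : Fin m → Fin n → ℝ) (X : Finset (Fin m)) (Y : Finset (Fin n))
    (j : Fin n) : Prop :=
  ∃ j' ∈ Y, ∀ i ∈ X, C i j < C i j'

open Classical in
/-- One round of iterated elimination: simultaneously delete every strictly dominated
action of both players in the current restricted game. -/
def elimStep {m n : ℕ} (R C : Fin m → Fin n → ℝ)
    (p : Finset (Fin m) × Finset (Fin n)) : Finset (Fin m) × Finset (Fin n) :=
  (p.1.filter fun i => ¬ RowDomIn R p.1 p.2 i,
   p.2.filter fun j => ¬ ColDomIn C p.1 p.2 j)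

/-- Surviving actions of the subgame `(p.1, p.2)` after iterated elimination of strictly
dominated actions (iterating `m + n` times surely reaches the fixed point). -/
def survivorsFrom {m n : ℕ} (R C : Fin m → Fin n → ℝ)
    (p : Finset (Fin m) × Finset (Fin n)) : Finset (Fin m) × Finset (Fin n) :=
  (elimStep R C)^[m + n] p

/-- The subgame `(p.1, p.2)` is strict-dominance solvable: exactly one action of each
player survives iterated elimination of strictly dominated actions. -/
def SolvableFrom {m n : ℕ} (R C : Fin m → Fin n → ℝ)
    (p : Finset (Fin m) × Finset (Fin n)) : Prop :=
  (survivorsFrom R C p).1.card = 1 ∧ (survivorsFrom R C p).2.card = 1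

/-- Surviving actions of the full game after iterated elimination. -/
def survivors {m n : ℕ} (R C : Fin m → Fin n → ℝ) : Finset (Fin m) × Finset (Fin n) :=
  survivorsFrom R C (Finset.univ, Finset.univ)

/-- The game is strict-dominance solvable. -/
def Solvable {m n : ℕ} (R C : Fin m → Fin n → ℝ) : Prop :=
  SolvableFrom R C (Finset.univ, Finset.univ)

/-- The number of rounds performed by the iterated elimination procedure:
the least `k` such that round `k + 1` deletes nothing more. -/
def elimRounds {m n : ℕ} (R C : Fin m → Fin n → ℝ) : ℕ :=
  sInf {k | (elimStep R C)^[k + 1] (Finset.univ, Finset.univ)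
          = (elimStep R C)^[k] (Finset.univ, Finset.univ)}

/-- Sample space of the random game `G(m,n)`: for each Column action an i.i.d. uniform
permutation giving Row's ordinal payoffs in that column, and for each Row action an
i.i.d. uniform permutation giving Column's ordinal payoffs in that row. -/
abbrev Omega (m n : ℕ) := (Fin n → Equiv.Perm (Fin m)) × (Fin m → Equiv.Perm (Fin n))

/-- Row's payoff matrix of the realized game. -/
def RPay {m n : ℕ} (ω : Omega m n) : Fin m → Fin n → ℝ := fun i j => ((ω.1 j) i : ℕ)

/-- Column's payoff matrix of the realized game. -/
def CPay {m n : ℕ} (ω : Omega m n) : Fin m → Fin n → ℝ := fun i j => ((ω.2 i) j : ℕ)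

/-- Probability of an event under the uniform distribution on `Omega m n`
(i.e. all `m + n` permutations uniform and mutually independent). -/
def Pr {m n : ℕ} (E : Set (Omega m n)) : ℝ :=
  (E.toFinite.toFinset.card : ℝ) / (Fintype.card (Omega m n) : ℝ)

open Classical in
/-- Number of Row actions that are not strictly dominated. -/
def UR {m n : ℕ} (ω : Omega m n) : ℕ :=
  (Finset.univ.filter fun i => ¬ RowDomIn (RPay ω) Finset.univ Finset.univ i).card

open Classical in
/-- Number of Column actions that are not strictly dominated. -/
def UC {m n : ℕ} (ω : Omega m n) : ℕ :=
  (Finset.univ.filter fun j => ¬ ColDomIn (CPay ω) Finset.univ Finset.univ j).card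

/-- Number of Row actions surviving iterated elimination. -/
def SR {m n : ℕ} (ω : Omega m n) : ℕ := (survivors (RPay ω) (CPay ω)).1.card

/-- Number of Column actions surviving iterated elimination. -/
def SC {m n : ℕ} (ω : Omega m n) : ℕ := (survivors (RPay ω) (CPay ω)).2.card

/-- The realized game is strict-dominance solvable. -/
def GameSolvable {m n : ℕ} (ω : Omega m n) : Prop := Solvable (RPay ω) (CPay ω)

/-- Number of rounds of the iterated elimination procedure in the realized game. -/
def GameRounds {m n : ℕ} (ω : Omega m n) : ℕ := elimRounds (RPay ω) (CPay ω)

/-- `π(m,n)`: probability that the random game `G(m,n)` is strict-dominance solvable. -/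
def probSolvable (m n : ℕ) : ℝ := Pr {ω : Omega m n | GameSolvable ω}

/-- Expected number of Column's strictly undominated actions, `E[U^C(m,n)]`. -/
def expUC (m n : ℕ) : ℝ :=
  (∑ ω : Omega m n, (UC ω : ℝ)) / (Fintype.card (Omega m n) : ℝ)

/-- Expected number of Column actions surviving iterated elimination, `E[S^C(m,n)]`. -/
def expSC (m n : ℕ) : ℝ :=
  (∑ ω : Omega m n, (SC ω : ℝ)) / (Fintype.card (Omega m n) : ℝ)

open Classical in
/-- `E[I(m,n)]`: expected number of elimination rounds conditional on the game being
strict-dominance solvable. -/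
def condExpRounds (m n : ℕ) : ℝ :=
  (∑ ω : Omega m n, if GameSolvable ω then (GameRounds ω : ℝ) else 0) /
    (∑ ω : Omega m n, if GameSolvable ω then (1 : ℝ) else 0)

/-- Unsigned Stirling numbers of the first kind. -/
def stirling1 : ℕ → ℕ → ℕ
  | 0, 0 => 1
  | 0, _ + 1 => 0
  | _ + 1, 0 => 0
  | n + 1, k + 1 => n * stirling1 n (k + 1) + stirling1 n k

end

/-!
In a `2 × n` game a column matters to Row only through the row it favours, and Column's
undominated columns form the Pareto front `F` of the points `(c₀ j, c₁ j)`. Elimination then runs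
deterministically: the game is solvable iff all of `F` favours one row `i`, and then it ends at `i`
against Column's best reply to `i` after `3 - [every column favours i] - [#F = 1]` rounds.
Listing the columns by `c₀` turns `F` into the right-to-left maxima of a uniform permutation.
Inserting a new minimal value creates a new maximum exactly when it is inserted last, which gives
the Stirling distribution of their number and `∑ τ, x ^ #max * y ^ #rest = ∏ k < n, (x + k y)`.
Summing, `E[I(2, n + 1)] = 3 - n! (n + 1 + 2ⁿ) / (2n + 1)!!`, which increases with `n`.
-/

open Equiv
open scoped Nat

section Settling

variable {α : Type*} {f : α → α} {x y : α} {r : ℕ}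

def SettlesAt (f : α → α) (x y : α) (r : ℕ) : Prop := ∀ k, f^[k] x = y ↔ r ≤ k

theorem settlesAt_self (hy : f y = y) : SettlesAt f y y 0 :=
  fun k => by simp [Function.iterate_fixed hy]

theorem SettlesAt.of_apply (h : SettlesAt f (f x) y r) (hx : x ≠ y) :
    SettlesAt f x y (r + 1) := by
  rintro (_ | k)
  · simpa using hx
  · simpa [Function.iterate_succ_apply] using h k

theorem settlesAt_of_apply_eq [DecidableEq α] (hx : f x = y) (hy : f y = y) :
    SettlesAt f x y (if x = y then 0 else 1) := by
  split_ifs with hxy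
  · subst hxy
    exact settlesAt_self hy
  · rw [← hx] at hy ⊢
    exact (settlesAt_self hy).of_apply (hx ▸ hxy)

theorem SettlesAt.sInf_eq (h : SettlesAt f x y r) :
    sInf {k | f^[k + 1] x = f^[k] x} = r := by
  refine IsLeast.csInf_eq ⟨?_, fun k hk => ?_⟩
  · rw [Set.mem_ofPred_eq, (h r).2 le_rfl, (h (r + 1)).2 (by omega)]
  · by_contra! hkr
    have hfix : f (f^[k] x) = f^[k] x := by rwa [← Function.iterate_succ_apply' f]
    have hr : f^[r] x = f^[k] x := by
      rw [show r = (r - k) + k by omega, Function.iterate_add_apply,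
        Function.iterate_fixed hfix]
    exact absurd ((h k).1 (hr ▸ (h r).2 le_rfl)) (by omega)

end Settling

namespace Equiv.Perm

variable {n : ℕ}

/-- Positions of the right-to-left maxima of the sequence `τ 0, τ 1, …`. -/
def records (τ : Perm (Fin n)) : Finset (Fin n) := {p | ∀ q, p < q → τ q < τ p}

theorem mem_records {τ : Perm (Fin n)} {p : Fin n} : p ∈ τ.records ↔ ∀ q, p < q → τ q < τ p := by
  simp [records]

/-- Insert the new minimal value `0` at position `q`, shifting the values of `σ` up by one. -/
def insertMin (q : Fin (n + 1)) (σ : Perm (Fin n)) : Perm (Fin (n + 1)) :=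
  (finSuccEquiv' q).trans (σ.optionCongr.trans (finSuccEquiv n).symm)

@[simp]
theorem insertMin_self (q : Fin (n + 1)) (σ : Perm (Fin n)) : insertMin q σ q = 0 := by
  simp [insertMin]

@[simp]
theorem insertMin_succAbove (q : Fin (n + 1)) (σ : Perm (Fin n)) (i : Fin n) :
    insertMin q σ (q.succAbove i) = (σ i).succ := by
  simp [insertMin]

theorem bijective_insertMin :
    Function.Bijective fun p : Fin (n + 1) × Perm (Fin n) => insertMin p.1 p.2 := by
  refine (Fintype.bijective_iff_injective_and_card _).2
    ⟨?_, by simp [Fintype.card_perm, Nat.factorial_succ]⟩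
  rintro ⟨q, σ⟩ ⟨q', σ'⟩ h
  dsimp only at h
  obtain rfl : q = q' := (insertMin q' σ').injective <| by
    rw [insertMin_self, ← h, insertMin_self]
  refine Prod.ext rfl (Equiv.ext fun i => Fin.succ_injective _ ?_)
  rw [← insertMin_succAbove q, h, insertMin_succAbove]

theorem self_mem_records_insertMin (q : Fin (n + 1)) (σ : Perm (Fin n)) :
    q ∈ (insertMin q σ).records ↔ q = Fin.last n := by
  rw [mem_records]
  refine ⟨fun h => ?_, fun h q' hq' => absurd hq' (h ▸ (Fin.le_last q').not_gt)⟩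
  by_contra hq
  simpa using h _ (Fin.lt_last_iff_ne_last.2 hq)

theorem succAbove_mem_records_insertMin (q : Fin (n + 1)) (σ : Perm (Fin n)) (i : Fin n) :
    q.succAbove i ∈ (insertMin q σ).records ↔ i ∈ σ.records := by
  simp only [mem_records]
  refine ⟨fun h i' hi' => ?_, fun h p hp => ?_⟩
  · simpa using h _ (Fin.succAbove_lt_succAbove_iff.2 hi')
  · rcases eq_or_ne p q with rfl | hpq
    · simp [Fin.succ_pos]
    · obtain ⟨i', rfl⟩ := Fin.exists_succAbove_eq hpq
      simpa using h i' (Fin.succAbove_lt_succAbove_iff.1 hp)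

theorem card_records_insertMin (q : Fin (n + 1)) (σ : Perm (Fin n)) :
    #(insertMin q σ).records = #σ.records + if q = Fin.last n then 1 else 0 := by
  have hcard {m : ℕ} (τ : Perm (Fin m)) : #τ.records = ∑ p, if p ∈ τ.records then 1 else 0 := by
    simp
  rw [hcard, hcard, Fin.sum_univ_succAbove _ q]
  simp [self_mem_records_insertMin, succAbove_mem_records_insertMin, add_comm]

theorem sum_card_records_succ {M : Type*} [AddCommMonoid M] (g : ℕ → M) :
    ∑ τ : Perm (Fin (n + 1)), g #τ.records =
      ∑ σ : Perm (Fin n), (n • g #σ.records + g (#σ.records + 1)) := by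
  rw [← Fintype.sum_bijective _ bijective_insertMin _ _ fun _ => rfl, Fintype.sum_prod_type,
    sum_comm]
  refine sum_congr rfl fun σ _ => ?_
  simp [card_records_insertMin, Fin.sum_univ_castSucc, Fin.castSucc_ne_last]

theorem card_filter_card_records_eq (n k : ℕ) :
    #{τ : Perm (Fin n) | #τ.records = k} = n.stirlingFirst k := by
  induction n generalizing k with
  | zero =>
    cases k <;> simp [eq_empty_of_isEmpty, Nat.stirlingFirst_zero, Nat.stirlingFirst_zero_succ]
  | succ n ih =>
    rw [card_filter, sum_card_records_succ fun r => if r = k then 1 else 0, sum_add_distrib,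
      ← smul_sum, ← card_filter, ih, smul_eq_mul]
    cases k with
    | zero => cases n <;> simp [Nat.stirlingFirst_succ_zero]
    | succ k => simp [ih, Nat.stirlingFirst_succ_succ]

theorem sum_pow_card_records_mul_pow {R : Type*} [CommSemiring R] (x y : R) (n : ℕ) :
    ∑ τ : Perm (Fin n), x ^ #τ.records * y ^ (n - #τ.records) =
      ∏ k ∈ range n, (x + k * y) := by
  induction n with
  | zero => simp [eq_empty_of_isEmpty]
  | succ n ih =>
    rw [sum_card_records_succ fun r => x ^ r * y ^ (n + 1 - r), prod_range_succ, ← ih, sum_mul]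
    refine sum_congr rfl fun σ _ => ?_
    have hle : #σ.records ≤ n := (card_le_univ _).trans (by simp)
    rw [show n + 1 - #σ.records = n - #σ.records + 1 by omega, Nat.add_sub_add_right, nsmul_eq_mul]
    ring

end Equiv.Perm

section ParetoFront

variable {n : ℕ}

def paretoFront (c : Fin 2 → Perm (Fin n)) : Finset (Fin n) := {j | ¬ ∃ j', ∀ i, c i j < c i j'}

/-- Listing the columns by increasing `c 0`, the front consists of the right-to-left maxima
of `c 1`. -/
theorem paretoFront_eq_map_records (c : Fin 2 → Perm (Fin n)) :
    paretoFront c = (c 1 * (c 0)⁻¹).records.map (c 0).symm.toEmbedding := by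
  ext j
  simp only [paretoFront, mem_filter, mem_univ, true_and, mem_map_equiv, symm_symm,
    Perm.mem_records, Fin.forall_fin_two, not_exists, not_and, Perm.mul_apply,
    Perm.coe_inv, symm_apply_apply]
  refine ⟨fun h q hq => ?_, fun h j' h0 h1 => ?_⟩
  · refine lt_of_le_of_ne (not_lt.1 (h _ (by simpa using hq))) fun e => hq.ne ?_
    rw [← (c 1).injective e, apply_symm_apply]
  · have h1' := h _ h0
    rw [symm_apply_apply] at h1'
    exact h1'.asymm h1

theorem sum_card_paretoFront {M : Type*} [AddCommMonoid M] (g : ℕ → M) :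
    ∑ c : Fin 2 → Perm (Fin n), g #(paretoFront c) = n ! • ∑ τ : Perm (Fin n), g #τ.records := by
  simp only [paretoFront_eq_map_records, card_map]
  rw [← (piFinTwoEquiv fun _ => Perm (Fin n)).symm.sum_comp, Fintype.sum_prod_type]
  simp only [piFinTwoEquiv_symm_apply, Fin.cons_zero, Fin.cons_one]
  rw [sum_congr rfl fun a _ => Equiv.sum_comp (Equiv.mulRight a⁻¹) fun τ => g #τ.records,
    sum_const, card_univ, Fintype.card_perm, Fintype.card_fin]

end ParetoFront

theorem card_filter_exists_forall_mem_eq {ι β : Type*} [Fintype ι] [DecidableEq ι] [Fintype β]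
    [DecidableEq β] {s : Finset ι} [DecidablePred fun v : ι → β => ∃ b, ∀ j ∈ s, v j = b]
    (hs : s.Nonempty) :
    #{v : ι → β | ∃ b, ∀ j ∈ s, v j = b} = Fintype.card β * Fintype.card β ^ #sᶜ := by
  have hfiber (b : β) : #{v : ι → β | ∀ j ∈ s, v j = b} = Fintype.card β ^ #sᶜ := by
    have : ({v : ι → β | ∀ j ∈ s, v j = b} : Finset _) =
        Fintype.piFinset fun j => if j ∈ s then {b} else univ := by
      ext v
      simp only [mem_filter, mem_univ, true_and, Fintype.mem_piFinset]
      refine forall_congr' fun j => ?_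
      split_ifs <;> simp [*]
    rw [this, Fintype.card_piFinset]
    simp [apply_ite, prod_ite, filter_not, ← compl_eq_univ_sdiff]
  obtain ⟨j₀, hj₀⟩ := hs
  have : ({v : ι → β | ∃ b, ∀ j ∈ s, v j = b} : Finset _) =
      univ.biUnion fun b => {v : ι → β | ∀ j ∈ s, v j = b} := by
    ext v
    simp
  rw [this, card_biUnion fun b _ b' _ hbb' => disjoint_left.2 fun v hv hv' => hbb' ?_]
  · simp [hfiber]
  · simp only [mem_filter, mem_univ, true_and] at hv hv'
    rw [← hv j₀ hj₀, hv' j₀ hj₀]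

theorem fin_two_eq_rev_of_ne {a b : Fin 2} (h : a ≠ b) : a = b.rev := by
  revert a b
  decide

theorem image_eq_univ_of_not_exists_forall_eq {α : Type*} {s : Finset α} {v : α → Fin 2}
    (h : ¬ ∃ i, ∀ j ∈ s, v j = i) : s.image v = univ := by
  refine eq_univ_iff_forall.2 fun i => by_contra fun hi => h ⟨i.rev, fun j hj => ?_⟩
  exact fin_two_eq_rev_of_ne fun e => hi (e ▸ mem_image_of_mem v hj)

theorem image_eq_singleton_of_forall_eq {α β : Type*} [DecidableEq β] {s : Finset α}
    (hs : s.Nonempty) {v : α → β} {b : β} (h : ∀ j ∈ s, v j = b) : s.image v = {b} :=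
  (image_congr h).trans (image_const hs b)

theorem elimStep_singleton_fst {m n : ℕ} (R C : Fin m → Fin n → ℝ) (i : Fin m)
    {Y : Finset (Fin n)} (hY : Y.Nonempty) : (elimStep R C ({i}, Y)).1 = {i} := by
  obtain ⟨j, hj⟩ := hY
  ext i'
  simp only [elimStep, RowDomIn, mem_filter, mem_singleton, exists_eq_left, and_iff_left_iff_imp]
  rintro rfl h
  exact lt_irrefl _ (h j hj)

theorem elimStep_singleton {m n : ℕ} (R C : Fin m → Fin n → ℝ) (i : Fin m) (j : Fin n) :
    elimStep R C ({i}, {j}) = ({i}, {j}) := by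
  refine Prod.ext (elimStep_singleton_fst R C i (singleton_nonempty j)) ?_
  simp [elimStep, ColDomIn]

section Game

variable {n : ℕ}

/-- The row that receives Row's higher payoff `1` in a column with payoffs `g`. -/
def favoredRow (g : Perm (Fin 2)) : Fin 2 := g⁻¹ 1

theorem bijective_favoredRow : Function.Bijective favoredRow := by decide

theorem apply_lt_apply_iff_favoredRow (g : Perm (Fin 2)) (i i' : Fin 2) :
    g i < g i' ↔ favoredRow g ≠ i ∧ favoredRow g = i' := by
  revert g i i'
  decide

def bestResponse (c : Fin 2 → Perm (Fin (n + 1))) (i : Fin 2) : Fin (n + 1) :=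
  (c i)⁻¹ (Fin.last n)

@[simp]
theorem apply_bestResponse (c : Fin 2 → Perm (Fin (n + 1))) (i : Fin 2) :
    c i (bestResponse c i) = Fin.last n := by
  simp [bestResponse]

theorem bestResponse_mem_paretoFront (c : Fin 2 → Perm (Fin (n + 1))) (i : Fin 2) :
    bestResponse c i ∈ paretoFront c := by
  simp only [paretoFront, mem_filter, mem_univ, true_and, not_exists]
  exact fun j' h => (h i).not_ge (by simpa using Fin.le_last _)

variable (ω : Omega 2 (n + 1))

theorem rowDomIn_univ_iff (Y : Finset (Fin (n + 1))) (i : Fin 2) :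
    RowDomIn (RPay ω) univ Y i ↔ ∀ j ∈ Y, favoredRow (ω.1 j) ≠ i := by
  simp only [RowDomIn, RPay, Nat.cast_lt, Fin.val_fin_lt, apply_lt_apply_iff_favoredRow,
    mem_univ, true_and]
  exact ⟨fun ⟨_, h⟩ j hj => (h j hj).1,
    fun h => ⟨i.rev, fun j hj => ⟨h j hj, fin_two_eq_rev_of_ne (h j hj)⟩⟩⟩

theorem colDomIn_iff (X : Finset (Fin 2)) (Y : Finset (Fin (n + 1))) (j : Fin (n + 1)) :
    ColDomIn (CPay ω) X Y j ↔ ∃ j' ∈ Y, ∀ i ∈ X, ω.2 i j < ω.2 i j' := by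
  simp [ColDomIn, CPay]

theorem elimStep_univ_fst (Y : Finset (Fin (n + 1))) :
    (elimStep (RPay ω) (CPay ω) (univ, Y)).1 = Y.image fun j => favoredRow (ω.1 j) := by
  ext i
  simp [elimStep, rowDomIn_univ_iff]

theorem elimStep_univ_univ_snd :
    (elimStep (RPay ω) (CPay ω) (univ, univ)).2 = paretoFront ω.2 := by
  ext j
  simp [elimStep, paretoFront, colDomIn_iff]

theorem elimStep_univ_paretoFront_snd :
    (elimStep (RPay ω) (CPay ω) (univ, paretoFront ω.2)).2 = paretoFront ω.2 := by
  ext j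
  simp only [elimStep, mem_filter, and_iff_left_iff_imp]
  intro hj hdom
  obtain ⟨j', -, hj'⟩ := (colDomIn_iff ω _ _ _).1 hdom
  simp only [paretoFront, mem_filter] at hj
  exact hj.2 ⟨j', fun i => hj' i (mem_univ i)⟩

theorem elimStep_singleton_paretoFront (i : Fin 2) :
    elimStep (RPay ω) (CPay ω) ({i}, paretoFront ω.2) = ({i}, {bestResponse ω.2 i}) := by
  have hbest := bestResponse_mem_paretoFront ω.2 i
  refine Prod.ext (elimStep_singleton_fst _ _ i ⟨_, hbest⟩) ?_
  ext j
  simp only [elimStep, mem_filter, colDomIn_iff, mem_singleton, forall_eq, not_exists, not_and,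
    not_lt]
  refine ⟨fun ⟨_, hmax⟩ => ?_, fun h => ⟨h ▸ hbest, fun x _ => h ▸ ?_⟩⟩
  · have := hmax _ hbest
    rw [apply_bestResponse] at this
    rw [bestResponse, ← Fin.last_le_iff.1 this, Perm.coe_inv, symm_apply_apply]
  · exact apply_bestResponse ω.2 i ▸ Fin.le_last _

theorem settlesAt_singleton_paretoFront (i : Fin 2) :
    SettlesAt (elimStep (RPay ω) (CPay ω)) ({i}, paretoFront ω.2) ({i}, {bestResponse ω.2 i})
      (if #(paretoFront ω.2) = 1 then 0 else 1) := by
  convert settlesAt_of_apply_eq (elimStep_singleton_paretoFront ω i)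
    (elimStep_singleton _ _ i _) using 2
  rw [card_eq_one]
  refine ⟨fun ⟨a, ha⟩ => ?_, fun h => ⟨_, congrArg Prod.snd h⟩⟩
  obtain rfl : bestResponse ω.2 i = a := mem_singleton.1 (ha ▸ bestResponse_mem_paretoFront ω.2 i)
  rw [ha]

theorem settlesAt_of_forall_mem_paretoFront {i : Fin 2}
    (hi : ∀ j ∈ paretoFront ω.2, favoredRow (ω.1 j) = i) :
    SettlesAt (elimStep (RPay ω) (CPay ω)) (univ, univ) ({i}, {bestResponse ω.2 i})
      ((if #(paretoFront ω.2) = 1 then 0 else 1) +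
        if ∀ j, favoredRow (ω.1 j) = i then 1 else 2) := by
  have hbest := bestResponse_mem_paretoFront ω.2 i
  have htail := settlesAt_singleton_paretoFront ω i
  have hne (Y : Finset (Fin (n + 1))) :
      ((univ, Y) : Finset (Fin 2) × _) ≠ ({i}, {bestResponse ω.2 i}) :=
    fun h => by simpa using congrArg (fun p => #p.1) h
  by_cases hconst : ∀ j, favoredRow (ω.1 j) = i
  · have hstep : elimStep (RPay ω) (CPay ω) (univ, univ) = ({i}, paretoFront ω.2) :=
      Prod.ext ((elimStep_univ_fst ω univ).trans
        (image_eq_singleton_of_forall_eq univ_nonempty fun j _ => hconst j))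
        (elimStep_univ_univ_snd ω)
    rw [if_pos hconst]
    exact (hstep ▸ htail).of_apply (hne univ)
  · have hstep₀ : elimStep (RPay ω) (CPay ω) (univ, univ) = (univ, paretoFront ω.2) := by
      refine Prod.ext ((elimStep_univ_fst ω univ).trans
        (image_eq_univ_of_not_exists_forall_eq ?_)) (elimStep_univ_univ_snd ω)
      rintro ⟨i', hi'⟩
      obtain rfl : i' = i := (hi' _ (mem_univ _)).symm.trans (hi _ hbest)
      exact hconst fun j => hi' j (mem_univ j)
    have hstep₁ : elimStep (RPay ω) (CPay ω) (univ, paretoFront ω.2) = ({i}, paretoFront ω.2) :=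
      Prod.ext ((elimStep_univ_fst ω _).trans (image_eq_singleton_of_forall_eq ⟨_, hbest⟩ hi))
        (elimStep_univ_paretoFront_snd ω)
    rw [if_neg hconst]
    exact (hstep₀ ▸ (hstep₁ ▸ htail).of_apply (hne _)).of_apply (hne univ)

theorem gameSolvable_and_gameRounds_eq {i : Fin 2}
    (hi : ∀ j ∈ paretoFront ω.2, favoredRow (ω.1 j) = i) :
    GameSolvable ω ∧ GameRounds ω = (if #(paretoFront ω.2) = 1 then 0 else 1) +
      if ∀ j, favoredRow (ω.1 j) = i then 1 else 2 := by
  have h := settlesAt_of_forall_mem_paretoFront ω hi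
  have hsurv : survivors (RPay ω) (CPay ω) = ({i}, {bestResponse ω.2 i}) :=
    (h _).2 (by split_ifs <;> omega)
  refine ⟨?_, h.sInf_eq⟩
  show #(survivors (RPay ω) (CPay ω)).1 = 1 ∧ #(survivors (RPay ω) (CPay ω)).2 = 1
  simp [hsurv]

theorem not_gameSolvable (h : ¬ ∃ i, ∀ j ∈ paretoFront ω.2, favoredRow (ω.1 j) = i) :
    ¬ GameSolvable ω := by
  have hfront := image_eq_univ_of_not_exists_forall_eq h
  have hstep₀ : elimStep (RPay ω) (CPay ω) (univ, univ) = (univ, paretoFront ω.2) :=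
    Prod.ext ((elimStep_univ_fst ω univ).trans (image_eq_univ_of_not_exists_forall_eq
      fun ⟨i, hi⟩ => h ⟨i, fun j _ => hi j (mem_univ j)⟩)) (elimStep_univ_univ_snd ω)
  have hstep₁ : elimStep (RPay ω) (CPay ω) (univ, paretoFront ω.2) = (univ, paretoFront ω.2) :=
    Prod.ext ((elimStep_univ_fst ω _).trans hfront) (elimStep_univ_paretoFront_snd ω)
  have hsurv : survivors (RPay ω) (CPay ω) = (univ, paretoFront ω.2) :=
    (settlesAt_of_apply_eq hstep₀ hstep₁ _).2 (by split_ifs <;> omega)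
  intro hsolv
  have h₁ : #(survivors (RPay ω) (CPay ω)).1 = 1 := hsolv.1
  simp [hsurv] at h₁

theorem gameSolvable_iff :
    GameSolvable ω ↔ ∃ i, ∀ j ∈ paretoFront ω.2, favoredRow (ω.1 j) = i :=
  ⟨fun hs => by_contra fun h => not_gameSolvable ω h hs,
    fun ⟨_, hi⟩ => (gameSolvable_and_gameRounds_eq ω hi).1⟩

open Classical in
theorem ite_gameSolvable_gameRounds :
    (if GameSolvable ω then (GameRounds ω : ℝ) else 0) =
      3 * (if ∃ i, ∀ j ∈ paretoFront ω.2, favoredRow (ω.1 j) = i then 1 else 0) -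
        (if ∃ i, ∀ j, favoredRow (ω.1 j) = i then 1 else 0) -
        if #(paretoFront ω.2) = 1 then 1 else 0 := by
  by_cases h : ∃ i, ∀ j ∈ paretoFront ω.2, favoredRow (ω.1 j) = i
  · rw [if_pos h]
    obtain ⟨i, hi⟩ := h
    obtain ⟨hsolv, hrounds⟩ := gameSolvable_and_gameRounds_eq ω hi
    have hconst : (∃ i', ∀ j, favoredRow (ω.1 j) = i') ↔ ∀ j, favoredRow (ω.1 j) = i := by
      refine ⟨fun ⟨i', hi'⟩ => ?_, fun h => ⟨i, h⟩⟩
      obtain rfl : i' = i := (hi' _).symm.trans (hi _ (bestResponse_mem_paretoFront ω.2 i))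
      exact hi'
    rw [if_pos hsolv, hrounds]
    simp only [hconst]
    split_ifs <;> norm_num
  · have hconst : ¬ ∃ i, ∀ j, favoredRow (ω.1 j) = i := fun ⟨i, hi⟩ => h ⟨i, fun j _ => hi j⟩
    have hcard : #(paretoFront ω.2) ≠ 1 := fun hcard => by
      obtain ⟨a, ha⟩ := card_eq_one.1 hcard
      exact h ⟨_, fun j hj => by rw [ha, mem_singleton] at hj; rw [hj]⟩
    rw [if_neg (mt (gameSolvable_iff ω).1 h), if_neg h, if_neg hconst, if_neg hcard]
    norm_num

end Game

section Counting

theorem sum_ite_exists_forall_mem_favoredRow {ι : Type*} [Fintype ι] [DecidableEq ι]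
    {s : Finset ι} [DecidablePred fun u : ι → Perm (Fin 2) => ∃ i, ∀ j ∈ s, favoredRow (u j) = i]
    (hs : s.Nonempty) :
    ∑ u : ι → Perm (Fin 2), (if ∃ i, ∀ j ∈ s, favoredRow (u j) = i then (1 : ℝ) else 0) =
      2 * 2 ^ #sᶜ := by
  rw [Fintype.sum_bijective _ bijective_favoredRow.comp_left
    (fun u => if ∃ i, ∀ j ∈ s, favoredRow (u j) = i then (1 : ℝ) else 0)
    (fun v => if ∃ i, ∀ j ∈ s, v j = i then (1 : ℝ) else 0) fun _ => if_congr Iff.rfl rfl rfl,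
    sum_boole, card_filter_exists_forall_mem_eq hs]
  simp

variable (n : ℕ)

theorem sum_ite_exists_forall_mem_paretoFront :
    ∑ ω : Omega 2 (n + 1),
        (if ∃ i, ∀ j ∈ paretoFront ω.2, favoredRow (ω.1 j) = i then (1 : ℝ) else 0) =
      2 * (n + 1)! * ∏ k ∈ range (n + 1), (2 * k + 1 : ℝ) := by
  rw [Fintype.sum_prod_type, sum_comm]
  calc _ = ∑ c : Fin 2 → Perm (Fin (n + 1)), 2 * (1 ^ #(paretoFront c) *
        (2 : ℝ) ^ (n + 1 - #(paretoFront c))) := by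
        refine sum_congr rfl fun c _ => ?_
        rw [sum_ite_exists_forall_mem_favoredRow ⟨_, bestResponse_mem_paretoFront c 0⟩,
          card_compl, Fintype.card_fin, one_pow, one_mul]
    _ = _ := by
        rw [sum_card_paretoFront fun r => 2 * (1 ^ r * (2 : ℝ) ^ (n + 1 - r)), ← mul_sum,
          Perm.sum_pow_card_records_mul_pow, nsmul_eq_mul,
          prod_congr rfl fun (k : ℕ) _ => show (1 : ℝ) + k * 2 = 2 * k + 1 by ring]
        ring

theorem sum_ite_exists_forall_favoredRow :
    ∑ ω : Omega 2 (n + 1), (if ∃ i, ∀ j, favoredRow (ω.1 j) = i then (1 : ℝ) else 0) =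
      2 * ((n + 1)! : ℝ) ^ 2 := by
  have h := sum_ite_exists_forall_mem_favoredRow (ι := Fin (n + 1)) univ_nonempty
  rw [compl_univ, card_empty, pow_zero, mul_one] at h
  rw [Fintype.sum_prod_type, sum_comm]
  calc _ = ∑ _c : Fin 2 → Perm (Fin (n + 1)), (2 : ℝ) :=
        sum_congr rfl fun _ _ => by simpa using h
    _ = _ := by simp [Fintype.card_perm]; ring

theorem sum_ite_card_paretoFront_eq_one :
    ∑ ω : Omega 2 (n + 1), (if #(paretoFront ω.2) = 1 then (1 : ℝ) else 0) =
      2 ^ (n + 1) * (n + 1)! * n ! := by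
  rw [Fintype.sum_prod_type, sum_congr rfl fun _ _ => sum_card_paretoFront
    fun r => if r = 1 then (1 : ℝ) else 0, sum_boole, Perm.card_filter_card_records_eq,
    Nat.stirlingFirst_one_right]
  simp [Fintype.card_perm]
  ring

end Counting

theorem condExpRounds_two_succ (n : ℕ) :
    condExpRounds 2 (n + 1) =
      3 - n ! * (n + 1 + 2 ^ n) / ∏ k ∈ range (n + 1), (2 * k + 1 : ℝ) := by
  classical
  unfold condExpRounds
  rw [sum_congr rfl fun ω _ => ite_gameSolvable_gameRounds ω,
    sum_congr rfl fun ω _ => if_congr (gameSolvable_iff ω) rfl rfl, sum_sub_distrib,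
    sum_sub_distrib, ← mul_sum, sum_ite_exists_forall_mem_paretoFront,
    sum_ite_exists_forall_favoredRow, sum_ite_card_paretoFront_eq_one]
  push_cast [Nat.factorial_succ]
  field_simp
  ring

/-- The conditional expected number of elimination rounds `E[I(2,n)]` is
strictly increasing in `n`: for every `n ≥ 1`, `E[I(2,n+1)] > E[I(2,n)]`. -/
theorem stmt6 (n : ℕ) (hn : 1 ≤ n) :
    condExpRounds 2 n < condExpRounds 2 (n + 1) := by
  obtain ⟨m, rfl⟩ := Nat.exists_eq_add_of_le' hn
  rw [condExpRounds_two_succ, condExpRounds_two_succ, prod_range_succ _ (m + 1)]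
  set D := ∏ k ∈ range (m + 1), (2 * k + 1 : ℝ)
  have hD : 0 < D := prod_pos fun k _ => by positivity
  rw [sub_lt_sub_iff_left, div_lt_div_iff₀ (by positivity) hD]
  push_cast [Nat.factorial_succ]
  have key : m ! * (m + 1 + 2 ^ m) * (D * (2 * (m + 1) + 1)) -
      (m + 1) * m ! * (m + 1 + 1 + 2 ^ (m + 1)) * D = m ! * D * ((m + 1) ^ 2 + 2 ^ m : ℝ) := by
    ring
  linarith [show 0 < m ! * D * ((m + 1) ^ 2 + 2 ^ m : ℝ) by positivity]
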